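/- arXiv:0706.4308 — 4 statements merged into one kernel-verified Lean document; each statement's English description precedes it below -/
import Mathlib

section
/- Let V be a finite-dimensional vector space over ℚ, L ⊆ V a full lattice (the ℤ-span of a basis of V), and W a finite subgroup of GL(V) with w(L) = L for all w ∈ W. For each reflection s ∈ W (an element with s² = id whose fixed subspace has codimension 1), let α_s^∨ be a generator of the rank-one free ℤ-module L ∩ {v : s(v) = −v}, and let α_s ∈ V* be the unique functional with s(x) = x − α_s(x)·α_s^∨ for all x. Then: (i) for any two reflections s, s' ∈ W one has α_s(α_{s'}^∨) ∈ ℤ; and (ii) for any reflection s ∈ W and any w ∈ W, the element w·s·w⁻¹ is again a reflection in W and w(α_s^∨) = α_{w s w⁻¹}^∨ or w(α_s^∨) = −α_{w s w⁻¹}^∨. In particular, the set R^∨ = {±α_s^∨ : s a reflection in W} ⊆ V is stable under the action of W. -/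
/-- A reflection of a `ℚ`-vector space: an involutive linear automorphism whose fixed
subspace has codimension one. -/
def IsReflection {V : Type*} [AddCommGroup V] [Module ℚ V] (s : V ≃ₗ[ℚ] V) : Prop :=
  (∀ x, s (s x) = x) ∧
  Module.finrank ℚ V
    = Module.finrank ℚ
        (LinearMap.ker (s.toLinearMap - (LinearMap.id : V →ₗ[ℚ] V))) + 1

/-!
Conjugating a reflection `s` by `w` conjugates its `(-1)`-eigenspace, and since `w` preserves
`L`, `w` carries the rank-one lattice `L ∩ {s v = -v}` onto `L ∩ {(w s w⁻¹) v = -v}`; a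
generator of a rank-one lattice is unique up to sign, whence `w (α_s^∨) = ± α_{w s w⁻¹}^∨`.
For integrality, `α_s(α_{s'}^∨) • α_s^∨ = α_{s'}^∨ - s (α_{s'}^∨)` lies in `L` and is
negated by `s`, so it is an integer multiple of `α_s^∨`.
-/

lemma eq_or_eq_neg_of_setOf_zsmul_eq {M : Type*} [AddCommGroup M] [IsAddTorsionFree M]
    {u v : M} (h : {x : M | ∃ n : ℤ, x = n • u} = {x : M | ∃ n : ℤ, x = n • v}) :
    u = v ∨ u = -v := by
  have hspan : (ℤ ∙ u) = (ℤ ∙ v) := by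
    ext x
    simpa only [Submodule.mem_span_singleton, Set.mem_ofPred_eq, eq_comm (a := x)]
      using Set.ext_iff.mp h x
  obtain ⟨z, hz⟩ := Submodule.span_singleton_eq_span_singleton.mp hspan
  rcases Int.units_eq_one_or z with rfl | rfl
  · left; simpa using hz
  · right; rw [← hz]; simp

lemma LinearEquiv.image_setOf_zsmul {R M : Type*} [Semiring R] [AddCommGroup M] [Module R M]
    (e : M ≃ₗ[R] M) (v : M) :
    ⇑e '' {x : M | ∃ n : ℤ, x = n • v} = {x : M | ∃ n : ℤ, x = n • e v} := by
  ext x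
  simp [eq_comm (a := x)]

lemma Subgroup.image_eq_of_forall_image_subset {R M : Type*} [Semiring R] [AddCommMonoid M]
    [Module R M] (W : Subgroup (M ≃ₗ[R] M)) {S : Set M} (hS : ∀ w ∈ W, ⇑w '' S ⊆ S)
    {w : M ≃ₗ[R] M} (hw : w ∈ W) : ⇑w '' S = S := by
  refine (hS w hw).antisymm fun x hx => ⟨w⁻¹ x, hS w⁻¹ (inv_mem hw) ⟨x, hx, rfl⟩, ?_⟩
  exact w.apply_symm_apply x

section

variable {V : Type*} [AddCommGroup V] [Module ℚ V]

lemma ker_conj_sub_id (w s : V ≃ₗ[ℚ] V) :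
    LinearMap.ker ((w * s * w⁻¹).toLinearMap - LinearMap.id)
      = (LinearMap.ker (s.toLinearMap - LinearMap.id)).map w.toLinearMap := by
  have hconj : (w * s * w⁻¹).toLinearMap - LinearMap.id
      = w.toLinearMap ∘ₗ (s.toLinearMap - LinearMap.id) ∘ₗ w.symm.toLinearMap := by
    ext x
    simp
  rw [hconj, LinearEquiv.ker_comp, LinearMap.ker_comp, Submodule.comap_equiv_eq_map_symm,
    LinearEquiv.symm_symm]

lemma IsReflection.conj {s : V ≃ₗ[ℚ] V} (hs : IsReflection s) (w : V ≃ₗ[ℚ] V) :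
    IsReflection (w * s * w⁻¹) := by
  refine ⟨fun x => by simp [LinearEquiv.mul_apply, hs.1], ?_⟩
  rw [ker_conj_sub_id, LinearEquiv.finrank_map_eq]
  exact hs.2

/-- The rank-one lattice generated by the coroot `α_s^∨`. -/
def latticeNegEigen (L : Submodule ℤ V) (s : V ≃ₗ[ℚ] V) : Set V :=
  {x : V | x ∈ L ∧ s x = -x}

lemma latticeNegEigen_conj {L : Submodule ℤ V} {w : V ≃ₗ[ℚ] V} (hwL : ⇑w '' L = L)
    (s : V ≃ₗ[ℚ] V) :
    latticeNegEigen L (w * s * w⁻¹) = ⇑w '' latticeNegEigen L s := by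
  rw [LinearEquiv.image_eq_preimage_symm] at hwL ⊢
  ext x
  simp only [latticeNegEigen, Set.mem_preimage, Set.mem_ofPred_eq, LinearEquiv.mul_apply]
  rw [← SetLike.mem_coe (x := x), ← hwL, Set.mem_preimage, SetLike.mem_coe]
  refine and_congr Iff.rfl ?_
  rw [← w.symm.injective.eq_iff, map_neg, w.symm_apply_apply]
  rfl

lemma mem_latticeNegEigen_of_eq {L : Submodule ℤ V} {s : V ≃ₗ[ℚ] V} {v : V}
    (hv : latticeNegEigen L s = {x : V | ∃ n : ℤ, x = n • v}) : v ∈ latticeNegEigen L s :=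
  hv ▸ ⟨1, (one_zsmul v).symm⟩

lemma exists_int_eq_of_apply_eq_sub_smul {L : Submodule ℤ V} {s : V ≃ₗ[ℚ] V} {v x : V}
    {a : ℚ} (hv : latticeNegEigen L s = {x : V | ∃ n : ℤ, x = n • v}) (hv0 : v ≠ 0)
    (hsL : ⇑s '' L = L) (hx : x ∈ L) (hsx : s x = x - a • v) : ∃ n : ℤ, a = n := by
  have hsv : s v = -v := (mem_latticeNegEigen_of_eq hv).2
  have hsx_mem : s x ∈ L := by
    rw [← SetLike.mem_coe, ← hsL]
    exact Set.mem_image_of_mem s hx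
  have hav : a • v ∈ latticeNegEigen L s := by
    refine ⟨?_, by rw [map_smul, hsv, smul_neg]⟩
    rw [show a • v = x - s x by rw [hsx]; abel]
    exact sub_mem hx hsx_mem
  rw [hv] at hav
  obtain ⟨n, hn⟩ := hav
  exact ⟨n, smul_left_injective ℚ hv0 (by simpa [Int.cast_smul_eq_zsmul] using hn)⟩

end

theorem stmt_3_general {V : Type*} [AddCommGroup V] [Module ℚ V]
    (L : Submodule ℤ V)
    (W : Subgroup (V ≃ₗ[ℚ] V))
    (hWL : ∀ w ∈ W, ⇑w '' (L : Set V) = (L : Set V))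
    (αv : (V ≃ₗ[ℚ] V) → V) (α : (V ≃ₗ[ℚ] V) → Module.Dual ℚ V)
    (hgen : ∀ s ∈ W, IsReflection s → αv s ≠ 0 ∧
      {x : V | x ∈ L ∧ s x = -x} = {x : V | ∃ n : ℤ, x = n • αv s})
    (hα : ∀ s ∈ W, IsReflection s → ∀ x : V, s x = x - α s x • αv s) :
    (∀ s ∈ W, ∀ s' ∈ W, IsReflection s → IsReflection s' →
        ∃ n : ℤ, α s (αv s') = (n : ℚ)) ∧
    (∀ s ∈ W, IsReflection s → ∀ w ∈ W,
        w * s * w⁻¹ ∈ W ∧ IsReflection (w * s * w⁻¹) ∧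
        (w (αv s) = αv (w * s * w⁻¹) ∨ w (αv s) = -αv (w * s * w⁻¹))) ∧
    (∀ w ∈ W,
        ⇑w '' {v : V | ∃ s ∈ W, IsReflection s ∧ (v = αv s ∨ v = -αv s)}
          = {v : V | ∃ s ∈ W, IsReflection s ∧ (v = αv s ∨ v = -αv s)}) := by
  have := IsAddTorsionFree.of_module_rat (M := V)
  have hconj : ∀ s ∈ W, IsReflection s → ∀ w ∈ W,
      w * s * w⁻¹ ∈ W ∧ IsReflection (w * s * w⁻¹) ∧
      (w (αv s) = αv (w * s * w⁻¹) ∨ w (αv s) = -αv (w * s * w⁻¹)) := by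
    intro s hs hr w hw
    have htW : w * s * w⁻¹ ∈ W := mul_mem (mul_mem hw hs) (inv_mem hw)
    have hrt := hr.conj w
    refine ⟨htW, hrt, eq_or_eq_neg_of_setOf_zsmul_eq ?_⟩
    calc {x : V | ∃ n : ℤ, x = n • w (αv s)}
        = ⇑w '' latticeNegEigen L s := by rw [← w.image_setOf_zsmul, ← (hgen s hs hr).2]; rfl
      _ = latticeNegEigen L (w * s * w⁻¹) := (latticeNegEigen_conj (hWL w hw) s).symm
      _ = {x : V | ∃ n : ℤ, x = n • αv (w * s * w⁻¹)} := (hgen _ htW hrt).2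
  refine ⟨fun s hs s' hs' hr hr' => ?_, hconj,
    fun w hw => W.image_eq_of_forall_image_subset ?_ hw⟩
  · exact exists_int_eq_of_apply_eq_sub_smul (hgen s hs hr).2 (hgen s hs hr).1 (hWL s hs)
      (mem_latticeNegEigen_of_eq (hgen s' hs' hr').2).1 (hα s hs hr _)
  · rintro w hw _ ⟨v, ⟨s, hs, hr, hv⟩, rfl⟩
    obtain ⟨htW, hrt, hpm⟩ := hconj s hs hr w hw
    refine ⟨_, htW, hrt, ?_⟩
    rcases hv with rfl | rfl <;> rcases hpm with h | h <;> simp [h]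

/-- Let `W` be a finite subgroup of `GL(V)` preserving a full lattice `L` in a
finite-dimensional `ℚ`-vector space `V`.  For each reflection `s ∈ W` let `αv s` be a
generator of the rank-one free `ℤ`-module `L ∩ {v : s v = -v}` and `α s ∈ V*` the
functional with `s x = x - α s x • αv s`.  Then: (i) `α s (αv s') ∈ ℤ` for all
reflections `s, s' ∈ W`; (ii) for a reflection `s ∈ W` and `w ∈ W`, the element
`w s w⁻¹` is a reflection in `W` and `w (αv s) = ± αv (w s w⁻¹)`; in particular the set
`R^∨ = {± αv s}` is stable under `W`. -/
theorem stmt_3 {V : Type*} [AddCommGroup V] [Module ℚ V] [FiniteDimensional ℚ V]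
    {ι : Type*} [Fintype ι] (b : Module.Basis ι ℚ V)
    (L : Submodule ℤ V) (hL : L = Submodule.span ℤ (Set.range b))
    (W : Subgroup (V ≃ₗ[ℚ] V)) [Finite W]
    (hWL : ∀ w ∈ W, ⇑w '' (L : Set V) = (L : Set V))
    (αv : (V ≃ₗ[ℚ] V) → V) (α : (V ≃ₗ[ℚ] V) → Module.Dual ℚ V)
    (hgen : ∀ s ∈ W, IsReflection s → αv s ≠ 0 ∧
      {x : V | x ∈ L ∧ s x = -x} = {x : V | ∃ n : ℤ, x = n • αv s})
    (hα : ∀ s ∈ W, IsReflection s → ∀ x : V, s x = x - α s x • αv s) :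
    (∀ s ∈ W, ∀ s' ∈ W, IsReflection s → IsReflection s' →
        ∃ n : ℤ, α s (αv s') = (n : ℚ)) ∧
    (∀ s ∈ W, IsReflection s → ∀ w ∈ W,
        w * s * w⁻¹ ∈ W ∧ IsReflection (w * s * w⁻¹) ∧
        (w (αv s) = αv (w * s * w⁻¹) ∨ w (αv s) = -αv (w * s * w⁻¹))) ∧
    (∀ w ∈ W,
        ⇑w '' {v : V | ∃ s ∈ W, IsReflection s ∧ (v = αv s ∨ v = -αv s)}
          = {v : V | ∃ s ∈ W, IsReflection s ∧ (v = αv s ∨ v = -αv s)}) :=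
  stmt_3_general L W hWL αv α hgen hα
end

section
/- Let V be a finite-dimensional real vector space, L ⊆ V a full lattice (the ℤ-span of a basis of V), and T = V ⧸ L the quotient topological abelian group. Let W' be a finite group of linear automorphisms of V with w(L) = L for all w ∈ W', acting on T by w • [v] = [w(v)]. Then the fixed-point set T^{W'} = {t ∈ T : w • t = t for all w ∈ W'} is a finite set if and only if the fixed subspace V^{W'} = {v ∈ V : w(v) = v for all w ∈ W'} is the zero subspace. -/
/-!
If a nonzero `v ∈ V` is fixed by `W'`, so is every point of the image of the line `ℝ v` in `T`.
That image is a quotient of the divisible group `ℝ`, so if it were finite it would be trivial,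
i.e. `ℝ v ⊆ L`, which is absurd for a lattice.

Conversely, if `[v]` is fixed then `w v - v ∈ L` for every `w ∈ W'`, while the average
`∑ w, w v` lies in `V^{W'} = 0`; hence `|W'| • v ∈ L`. So every fixed point is `|W'|`-torsion,
and the `n`-torsion of `T ≅ (ℝ/ℤ)^ι` is finite.
-/

open Submodule Set

theorem AddMonoidHom.eq_zero_of_finite_range {A G : Type*} [AddCommGroup A] [Module ℚ A]
    [AddCommGroup G] (f : A →+ G) (hf : (Set.range f).Finite) : f = 0 := by
  have : Finite f.range := hf
  ext x
  set N := Nat.card f.range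
  have hN : (N : ℚ) ≠ 0 := Nat.cast_ne_zero.2 Nat.card_pos.ne'
  have hx : x = N • ((N : ℚ)⁻¹ • x) := by
    rw [← Nat.cast_smul_eq_nsmul ℚ, smul_smul, mul_inv_cancel₀ hN, one_smul]
  have := congrArg Subtype.val (card_nsmul_eq_zero' (x := (⟨f ((N : ℚ)⁻¹ • x), _, rfl⟩ : f.range)))
  rw [AddMonoidHom.zero_apply, hx, map_nsmul]
  exact this

section Averaging

variable {G M : Type*} [Group G] [Fintype G] [AddCommGroup M] [DistribMulAction G M]

theorem sum_smul_mem_fixedPoints (v : M) : ∑ g : G, g • v ∈ MulAction.fixedPoints G M := by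
  intro h
  simp only [Finset.smul_sum, smul_smul]
  exact Fintype.sum_equiv (Equiv.mulLeft h) _ _ fun _ => rfl

theorem AddSubgroup.card_nsmul_mem_of_forall_smul_sub_mem (L : AddSubgroup M)
    (hfix : MulAction.fixedPoints G M ⊆ {0}) {v : M} (hv : ∀ g : G, g • v - v ∈ L) :
    Fintype.card G • v ∈ L := by
  have hsum : ∑ g : G, g • v = 0 := hfix (sum_smul_mem_fixedPoints v)
  have : Fintype.card G • v = -∑ g : G, (g • v - v) := by
    rw [Finset.sum_sub_distrib, hsum, Finset.sum_const, Finset.card_univ, zero_sub, neg_neg]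
  rw [this]
  exact neg_mem (sum_mem fun g _ => hv g)

end Averaging

namespace Module.Basis

variable {V ι : Type*} [AddCommGroup V] [Module ℝ V] (b : Basis ι ℝ V)

theorem eq_zero_of_forall_smul_mem_span_int {v : V}
    (h : ∀ c : ℝ, c • v ∈ span ℤ (range b)) : v = 0 := by
  refine b.repr.map_eq_zero_iff.1 (Finsupp.ext fun i => ?_)
  by_contra ha
  rw [Finsupp.coe_zero, Pi.zero_apply] at ha
  obtain ⟨m, hm⟩ := (b.mem_span_iff_repr_mem ℤ _).1 (h (2 * b.repr v i)⁻¹) i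
  rw [map_smul, Finsupp.smul_apply, smul_eq_mul, algebraMap_int_eq, eq_intCast] at hm
  have : (2 * m : ℝ) = 1 := by rw [hm]; field_simp
  norm_cast at this
  omega

noncomputable def torusCoord : V ⧸ (span ℤ (range b)).toAddSubgroup →+ (ι → AddCircle (1 : ℝ)) :=
  QuotientAddGroup.lift _
    (AddMonoidHom.pi fun i => (QuotientAddGroup.mk' _).comp (b.coord i).toAddMonoidHom)
    fun v hv => funext fun i => by
      obtain ⟨m, hm⟩ := (b.mem_span_iff_repr_mem ℤ v).1 hv i
      show ((b.repr v i : ℝ) : AddCircle (1 : ℝ)) = 0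
      rw [← hm]
      exact (AddCircle.coe_eq_zero_iff (1 : ℝ)).2 ⟨m, by simp⟩

theorem torusCoord_injective : Function.Injective b.torusCoord := by
  refine (injective_iff_map_eq_zero _).2 fun t ht => ?_
  obtain ⟨v, rfl⟩ := QuotientAddGroup.mk_surjective t
  refine (QuotientAddGroup.eq_zero_iff v).2 ((b.mem_span_iff_repr_mem ℤ v).2 fun i => ?_)
  obtain ⟨m, hm⟩ := (AddCircle.coe_eq_zero_iff (1 : ℝ)).1 (congrFun ht i)
  exact ⟨m, by simpa using hm⟩

theorem finite_setOf_nsmul_eq_zero_quotient [Finite ι] {n : ℕ} (hn : n ≠ 0) :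
    {t : V ⧸ (span ℤ (range b)).toAddSubgroup | n • t = 0}.Finite := by
  refine ((Set.Finite.pi' fun _ => AddCircle.finite_torsion (p := (1 : ℝ))
    (Nat.pos_of_ne_zero hn)).preimage b.torusCoord_injective.injOn).subset fun t ht i => ?_
  show n • b.torusCoord t i = 0
  rw [← Pi.smul_apply, ← map_nsmul, ht, map_zero, Pi.zero_apply]

end Module.Basis

theorem stmt_4_general {V : Type*} [AddCommGroup V] [Module ℝ V]
    {ι : Type*} [Fintype ι] (b : Module.Basis ι ℝ V)
    (L : Submodule ℤ V) (hL : L = Submodule.span ℤ (Set.range b))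
    (W' : Subgroup (V ≃ₗ[ℝ] V)) [Finite W']
    (hW'L : ∀ w ∈ W', ⇑w '' (L : Set V) = (L : Set V)) :
    {t : V ⧸ L.toAddSubgroup | ∀ w ∈ W', ∀ v : V,
        (QuotientAddGroup.mk v : V ⧸ L.toAddSubgroup) = t →
        (QuotientAddGroup.mk (w v) : V ⧸ L.toAddSubgroup) = t}.Finite
      ↔ {v : V | ∀ w ∈ W', w v = v} = {0} := by
  subst hL
  have hmaps : ∀ w ∈ W', ∀ x ∈ span ℤ (range b), w x ∈ span ℤ (range b) :=
    fun w hw x hx => (hW'L w hw).subset (mem_image_of_mem w hx)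
  constructor
  · intro hfin
    refine eq_singleton_iff_unique_mem.2 ⟨fun w _ => map_zero w, fun v hv => ?_⟩
    let f : ℝ →+ V ⧸ (span ℤ (range b)).toAddSubgroup :=
      (QuotientAddGroup.mk' _).comp (LinearMap.toSpanSingleton ℝ V v).toAddMonoidHom
    have hrange : (Set.range f).Finite := hfin.subset <| by
      rintro _ ⟨c, rfl⟩ w hw u hu
      change _ = QuotientAddGroup.mk (c • v) at hu
      change QuotientAddGroup.mk (w u) = QuotientAddGroup.mk (c • v)
      rw [QuotientAddGroup.eq_iff_sub_mem] at hu ⊢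
      simpa [hv w hw] using hmaps w hw _ hu
    exact b.eq_zero_of_forall_smul_mem_span_int fun c =>
      (QuotientAddGroup.eq_zero_iff _).1 (DFunLike.congr_fun (f.eq_zero_of_finite_range hrange) c)
  · intro h0
    have := Fintype.ofFinite W'
    refine (b.finite_setOf_nsmul_eq_zero_quotient (Fintype.card_ne_zero (α := W'))).subset ?_
    intro t ht
    obtain ⟨v, rfl⟩ := QuotientAddGroup.mk_surjective t
    have hsub : ∀ w : W', w • v - v ∈ (span ℤ (range b)).toAddSubgroup :=
      fun w => QuotientAddGroup.eq_iff_sub_mem.1 (ht w w.2 v rfl)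
    have hfix : MulAction.fixedPoints W' V ⊆ {0} :=
      fun x hx => h0.subset fun w hw => hx ⟨w, hw⟩
    rw [mem_ofPred_eq, ← QuotientAddGroup.mk_nsmul, QuotientAddGroup.eq_zero_iff]
    exact AddSubgroup.card_nsmul_mem_of_forall_smul_sub_mem _ hfix hsub

/-- Let `V` be a finite-dimensional real vector space, `L` the `ℤ`-span of a basis of
`V`, `T = V ⧸ L` the quotient torus, and `W'` a finite group of linear automorphisms of
`V` preserving `L`, acting on `T` by `w • [v] = [w v]`.  Then the fixed-point set
`T^{W'}` is finite if and only if the fixed subspace `V^{W'}` is zero. -/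
theorem stmt_4 {V : Type*} [AddCommGroup V] [Module ℝ V] [FiniteDimensional ℝ V]
    {ι : Type*} [Fintype ι] (b : Module.Basis ι ℝ V)
    (L : Submodule ℤ V) (hL : L = Submodule.span ℤ (Set.range b))
    (W' : Subgroup (V ≃ₗ[ℝ] V)) [Finite W']
    (hW'L : ∀ w ∈ W', ⇑w '' (L : Set V) = (L : Set V)) :
    {t : V ⧸ L.toAddSubgroup | ∀ w ∈ W', ∀ v : V,
        (QuotientAddGroup.mk v : V ⧸ L.toAddSubgroup) = t →
        (QuotientAddGroup.mk (w v) : V ⧸ L.toAddSubgroup) = t}.Finite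
      ↔ {v : V | ∀ w ∈ W', w v = v} = {0} :=
  stmt_4_general b L hL W' hW'L
end

section
/- Let V be a finite-dimensional real vector space, L ⊆ V a full lattice (the ℤ-span of a basis of V), and T = V ⧸ L the quotient topological abelian group. Let W' be a finite group of linear automorphisms of V with w(L) = L for all w ∈ W', acting on T by w • [v] = [w(v)]. Then a point t ∈ T with w • t = t for all w ∈ W' is an isolated point of the fixed-point set T^{W'} = {x ∈ T : w • x = x for all w ∈ W'} (in the subspace topology) if and only if the fixed subspace V^{W'} = {v ∈ V : w(v) = v for all w ∈ W'} is the zero subspace. -/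
/-!
Choose a representative `v` of `t`. For `d ∈ V`, the class `[v + d]` is fixed by `W'` iff
`w d - d ∈ L` for every `w ∈ W'`, and it equals `t` iff `d ∈ L`. As `L` is discrete and `W'`
is finite, for `d` near `0` the vectors `w d - d` can lie in `L` only by vanishing, so `t` is
isolated iff the small `W'`-fixed vectors lie in `L`. A nonzero fixed vector `v₀` violates this
along `s • v₀` for small `s ≠ 0`; if there is none, a small fixed `d` is `0`.
-/

open Filter Set Topology

theorem isDiscrete_span_int_basis {V ι : Type*} [AddCommGroup V] [Module ℝ V]
    [TopologicalSpace V] [IsTopologicalAddGroup V] [ContinuousSMul ℝ V] [T2Space V] [Finite ι]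
    (b : Module.Basis ι ℝ V) : IsDiscrete (Submodule.span ℤ (range b) : Set V) := by
  have hpi : IsDiscrete (Submodule.span ℤ (range (Pi.basisFun ℝ ι)) : Set (ι → ℝ)) :=
    isDiscrete_iff_discreteTopology.mpr ZSpan.discreteTopology_pi_basisFun
  convert hpi.preimage (continuous_equivFun_basis b).continuousOn b.equivFun.injective using 1
  ext v
  simp only [SetLike.mem_coe, mem_preimage, b.mem_span_iff_repr_mem ℤ,
    (Pi.basisFun ℝ ι).mem_span_iff_repr_mem ℤ, Pi.basisFun_repr, Module.Basis.equivFun_apply]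

theorem AddSubgroup.eventually_mem_imp_eq_zero {G : Type*} [AddGroup G] [TopologicalSpace G]
    {L : AddSubgroup G} (hL : IsDiscrete (L : Set G)) : ∀ᶠ x in 𝓝 (0 : G), x ∈ L → x = 0 := by
  have h : ∀ᶠ x in 𝓝[(L : Set G)] 0, x = 0 := by
    rw [hL.nhdsWithin 0 L.zero_mem]
    exact rfl
  exact eventually_nhdsWithin_iff.mp h

theorem exists_isOpen_inter_eq_singleton_iff_of_isOpenMap {X Y : Type*} [TopologicalSpace X]
    [TopologicalSpace Y] {π : X → Y} (hc : Continuous π) (ho : IsOpenMap π) {F : Set Y} {x : X}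
    (hx : π x ∈ F) :
    (∃ U, IsOpen U ∧ U ∩ F = {π x}) ↔ ∀ᶠ u in 𝓝 x, π u ∈ F → π u = π x := by
  constructor
  · rintro ⟨U, hU, hUF⟩
    have hxU : π x ∈ U := (hUF.symm ▸ rfl : π x ∈ U ∩ F).1
    filter_upwards [hc.continuousAt.preimage_mem_nhds (hU.mem_nhds hxU)] with u hu huF
    exact (hUF.subset ⟨hu, huF⟩ : π u ∈ {π x})
  · intro h
    obtain ⟨O, hO, hOopen, hxO⟩ := eventually_nhds_iff.mp h
    refine ⟨π '' O, ho O hOopen, subset_antisymm ?_ ?_⟩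
    · rintro _ ⟨⟨u, hu, rfl⟩, huF⟩
      exact hO u hu huF
    · rintro _ rfl
      exact ⟨mem_image_of_mem π hxO, hx⟩

section FixedPoints

variable {V F : Type*} [AddCommGroup V] [FunLike F V V] [AddMonoidHomClass F V V]
  {L : AddSubgroup V} {W : Set F}

theorem QuotientAddGroup.forall_mk_eq_imp_mk_apply_eq_iff (hWL : ∀ w ∈ W, ∀ l ∈ L, w l ∈ L)
    (u : V) :
    (∀ w ∈ W, ∀ v : V, (v : V ⧸ L) = u → ((w v : V) : V ⧸ L) = u) ↔ ∀ w ∈ W, w u - u ∈ L := by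
  simp only [QuotientAddGroup.eq_iff_sub_mem]
  refine ⟨fun h w hw => h w hw u (sub_self u ▸ L.zero_mem), fun h w hw v hv => ?_⟩
  have hsplit : w v - u = w (v - u) + (w u - u) := by rw [map_sub]; abel
  exact hsplit ▸ L.add_mem (hWL w hw _ hv) (h w hw)

theorem eventually_sub_mem_imp_mk_eq_iff [TopologicalSpace V] [IsTopologicalAddGroup V] {v : V}
    (hv : ∀ w ∈ W, w v - v ∈ L) :
    (∀ᶠ u in 𝓝 v, (∀ w ∈ W, w u - u ∈ L) → (u : V ⧸ L) = v) ↔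
      ∀ᶠ d in 𝓝 0, (∀ w ∈ W, w d - d ∈ L) → d ∈ L := by
  rw [← map_add_left_nhds_zero v, eventually_map]
  refine eventually_congr (Eventually.of_forall fun d => ?_)
  have hshift : ∀ w ∈ W, w (v + d) - (v + d) = (w v - v) + (w d - d) := fun w _ => by
    rw [map_add]; abel
  simp only [QuotientAddGroup.eq_iff_sub_mem, add_sub_cancel_left]
  refine imp_congr_left (forall₂_congr fun w hw => ?_)
  rw [hshift w hw, L.add_mem_cancel_left (hv w hw)]

end FixedPoints

section DiscreteSubgroup

variable {V F : Type*} [AddCommGroup V] [Module ℝ V] [TopologicalSpace V]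
  [IsTopologicalAddGroup V] [ContinuousSMul ℝ V] [FunLike F V V] [LinearMapClass F ℝ V V]
  {L : AddSubgroup V} {W : Set F}

theorem eventually_sub_mem_imp_mem_iff [Finite W] (hL : IsDiscrete (L : Set V))
    (hW : ∀ w ∈ W, Continuous w) :
    (∀ᶠ d in 𝓝 (0 : V), (∀ w ∈ W, w d - d ∈ L) → d ∈ L) ↔
      {v : V | ∀ w ∈ W, w v = v} = {0} := by
  have hL0 := AddSubgroup.eventually_mem_imp_eq_zero hL
  rw [eq_singleton_iff_unique_mem]
  refine ⟨fun h => ⟨fun w _ => map_zero w, fun v₀ hv₀ => ?_⟩, fun ⟨_, hfix⟩ => ?_⟩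
  · have hsmul : Tendsto (fun s : ℝ => s • v₀) (𝓝[≠] 0) (𝓝 0) :=
      ((continuous_id.smul continuous_const).tendsto' 0 0 (zero_smul ℝ v₀)).mono_left
        nhdsWithin_le_nhds
    obtain ⟨s, hs0, hsL, hs⟩ :=
      ((eventually_mem_nhdsWithin (a := (0 : ℝ))).and (hsmul.eventually (h.and hL0))).exists
    have hsv₀ : ∀ w ∈ W, w (s • v₀) - s • v₀ ∈ L := fun w hw => by
      rw [map_smul, hv₀ w hw, sub_self]
      exact L.zero_mem
    exact (smul_eq_zero.mp (hs (hsL hsv₀))).resolve_left hs0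
  · have hdefect : ∀ w ∈ W, ∀ᶠ d in 𝓝 (0 : V), w d - d ∈ L → w d - d = 0 := fun w hw =>
      ((hW w hw).sub continuous_id).tendsto' 0 0 (by simp) |>.eventually hL0
    filter_upwards [(eventually_all_finite W.toFinite).mpr hdefect] with d hd hdL
    have hd0 : d = 0 := hfix d fun w hw => sub_eq_zero.mp (hd w hw (hdL w hw))
    exact hd0 ▸ L.zero_mem

end DiscreteSubgroup

/-- Let `V` be a finite-dimensional real (Hausdorff topological) vector space, `L` the
`ℤ`-span of a basis of `V`, `T = V ⧸ L` the quotient torus with the quotient topology,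
and `W'` a finite group of linear automorphisms of `V` preserving `L`, acting on `T` by
`w • [v] = [w v]`.  A `W'`-fixed point `t ∈ T` is an isolated point of the fixed set
`T^{W'}` if and only if the fixed subspace `V^{W'}` is zero. -/
theorem stmt_6 {V : Type*} [AddCommGroup V] [Module ℝ V] [FiniteDimensional ℝ V]
    [TopologicalSpace V] [IsTopologicalAddGroup V] [ContinuousSMul ℝ V] [T2Space V]
    {ι : Type*} [Fintype ι] (b : Module.Basis ι ℝ V)
    (L : Submodule ℤ V) (hL : L = Submodule.span ℤ (Set.range b))
    (W' : Subgroup (V ≃ₗ[ℝ] V)) [Finite W']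
    (hW'L : ∀ w ∈ W', ⇑w '' (L : Set V) = (L : Set V))
    (t : V ⧸ L.toAddSubgroup)
    (ht : ∀ w ∈ W', ∀ v : V,
        (QuotientAddGroup.mk v : V ⧸ L.toAddSubgroup) = t →
        (QuotientAddGroup.mk (w v) : V ⧸ L.toAddSubgroup) = t) :
    (∃ U : Set (V ⧸ L.toAddSubgroup), IsOpen U ∧
        U ∩ {x : V ⧸ L.toAddSubgroup | ∀ w ∈ W', ∀ v : V,
            (QuotientAddGroup.mk v : V ⧸ L.toAddSubgroup) = x →
            (QuotientAddGroup.mk (w v) : V ⧸ L.toAddSubgroup) = x} = {t})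
      ↔ {v : V | ∀ w ∈ W', w v = v} = {0} := by
  obtain ⟨v, rfl⟩ := QuotientAddGroup.mk_surjective t
  have hWL : ∀ w ∈ (W' : Set (V ≃ₗ[ℝ] V)), ∀ l ∈ L.toAddSubgroup, w l ∈ L.toAddSubgroup :=
    fun w hw l hl => (hW'L w hw).subset (mem_image_of_mem w hl)
  have hfix := QuotientAddGroup.forall_mk_eq_imp_mk_apply_eq_iff hWL
  refine Iff.trans (exists_isOpen_inter_eq_singleton_iff_of_isOpenMap
    QuotientAddGroup.continuous_mk QuotientAddGroup.isOpenMap_coe ht) <|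
    (eventually_congr (Eventually.of_forall fun u => imp_congr_left (hfix u))).trans ?_
  rw [eventually_sub_mem_imp_mk_eq_iff ((hfix v).mp ht)]
  exact eventually_sub_mem_imp_mem_iff (hL ▸ isDiscrete_span_int_basis b)
    fun w _ => LinearMap.continuous_of_finiteDimensional w.toLinearMap
end

section
/- Let V be a finite-dimensional real vector space, L ⊆ V a full lattice (the ℤ-span of a basis of V), and T = V ⧸ L the quotient topological abelian group. Let W be a finite group of linear automorphisms of V with w(L) = L for all w ∈ W, acting on T by w • [v] = [w(v)]. For t ∈ T let W_t = {w ∈ W : w • t = t} denote its stabilizer. Then the set Σ = { t ∈ T : t is an isolated point of the fixed set {x ∈ T : w • x = x for all w ∈ W_t} } is finite. -/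
/-!
The fixed set of any subset `A ⊆ W` is a closed subgroup of the compact torus `T`. A subgroup is
homogeneous, so if one of its points is isolated then all are, and a compact discrete set is finite.
Every point of `Σ` is isolated in the fixed set of its own stabilizer, one of the finitely many
subsets of `W`, so `Σ` is a finite union of finite sets.
-/

open Set Submodule

section IsolatedPoints

variable {G : Type*} [AddGroup G] [TopologicalSpace G] [IsTopologicalAddGroup G]

theorem AddSubgroup.isDiscrete_of_isOpen_inter_eq_singleton (H : AddSubgroup G) {t : G}
    {U : Set G} (hU : IsOpen U) (hUt : U ∩ H = {t}) : IsDiscrete (H : Set G) := by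
  have ht : t ∈ U ∩ H := hUt ▸ mem_singleton t
  rw [isDiscrete_iff_forall_mem_exists_isOpen]
  intro s hs
  refine ⟨(fun x => x - s + t) ⁻¹' U, hU.preimage (by fun_prop), ?_⟩
  ext x
  constructor
  · rintro ⟨hxU, hxH⟩
    have hx : x - s + t ∈ U ∩ H := ⟨hxU, H.add_mem (H.sub_mem hxH hs) ht.2⟩
    rw [hUt, mem_singleton_iff, add_eq_right, sub_eq_zero] at hx
    exact hx
  · rintro rfl
    exact ⟨by simpa using ht.1, hs⟩

theorem AddSubgroup.finite_setOf_isolated [CompactSpace G] (H : AddSubgroup G)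
    (hH : IsClosed (H : Set G)) : {t | ∃ U, IsOpen U ∧ U ∩ (H : Set G) = {t}}.Finite := by
  rcases eq_empty_or_nonempty {t | ∃ U, IsOpen U ∧ U ∩ (H : Set G) = {t}} with
    h | ⟨t, U, hU, hUt⟩
  · simp [h]
  · refine (hH.isCompact.finite (H.isDiscrete_of_isOpen_inter_eq_singleton hU hUt)).subset ?_
    rintro s ⟨V, -, hV⟩
    exact (hV ▸ mem_singleton s : s ∈ V ∩ H).2

end IsolatedPoints

section FixedPoints

variable {G ι : Type*} [AddGroup G] (f : ι → G →+ G)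

def fixedAddSubgroup (S : Set ι) : AddSubgroup G where
  carrier := {x | ∀ i ∈ S, f i x = x}
  add_mem' hx hy i hi := by rw [map_add, hx i hi, hy i hi]
  zero_mem' i _ := map_zero (f i)
  neg_mem' hx i hi := by rw [map_neg, hx i hi]

variable [TopologicalSpace G] [T2Space G]

theorem isClosed_fixedAddSubgroup (hf : ∀ i, Continuous (f i)) (S : Set ι) :
    IsClosed (fixedAddSubgroup f S : Set G) := by
  change IsClosed {x | ∀ i ∈ S, f i x = x}
  simp only [ofPred_forall]
  exact isClosed_iInter fun i => isClosed_iInter fun _ => isClosed_eq (hf i) continuous_id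

theorem finite_setOf_isolated_in_fixedPoints_of_stabilizer [IsTopologicalAddGroup G]
    [CompactSpace G] [Finite ι] (hf : ∀ i, Continuous (f i)) :
    {t | ∃ U, IsOpen U ∧ U ∩ {x | ∀ i, f i t = t → f i x = x} = {t}}.Finite := by
  refine (finite_iUnion fun S => (fixedAddSubgroup f S).finite_setOf_isolated
    (isClosed_fixedAddSubgroup f hf S)).subset ?_
  rintro t ⟨U, hU, hUt⟩
  exact mem_iUnion.2 ⟨{i | f i t = t}, U, hU, hUt⟩

end FixedPoints

namespace QuotientAddGroup

variable {G H : Type*} [AddGroup G] [AddGroup H]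

theorem map_eq_self_iff (N : AddSubgroup G) [N.Normal] (f : G →+ G) (h : N ≤ N.comap f)
    (x : G ⧸ N) : map N N f h x = x ↔ ∀ v : G, (v : G ⧸ N) = x → (f v : G ⧸ N) = x := by
  induction x using QuotientAddGroup.induction_on with | H u =>
  refine ⟨fun hu v hv => ?_, fun hu => hu u rfl⟩
  rw [← map_mk N N f h, hv, hu]

theorem continuous_map [TopologicalSpace G] [TopologicalSpace H] (N : AddSubgroup G)
    (M : AddSubgroup H) [N.Normal] [M.Normal] (f : G →+ H) (h : N ≤ M.comap f)
    (hf : Continuous f) : Continuous (map N M f h) :=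
  (isQuotientMap_mk N).continuous_iff.2 (continuous_quot_mk.comp hf)

end QuotientAddGroup

namespace Module.Basis

variable {V ι : Type*} [AddCommGroup V] [Module ℝ V]

theorem mk_image_parallelepiped [Fintype ι] (b : Basis ι ℝ V) :
    (QuotientAddGroup.mk '' _root_.parallelepiped b :
      Set (V ⧸ (span ℤ (range b)).toAddSubgroup)) = univ := by
  refine eq_univ_of_forall fun x => ?_
  induction x using QuotientAddGroup.induction_on with | H v =>
  refine ⟨∑ i, Int.fract (b.repr v i) • b i, (mem_parallelepiped_iff _ _).2
    ⟨_, ⟨fun i => Int.fract_nonneg _, fun i => (Int.fract_lt_one _).le⟩, rfl⟩, ?_⟩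
  rw [QuotientAddGroup.eq]
  have hv : -∑ i, Int.fract (b.repr v i) • b i + v = ∑ i, ⌊b.repr v i⌋ • b i := by
    conv_lhs => enter [2]; rw [← b.sum_repr v]
    rw [neg_add_eq_sub, ← Finset.sum_sub_distrib]
    refine Finset.sum_congr rfl fun i _ => ?_
    rw [← sub_smul, Int.self_sub_fract, Int.cast_smul_eq_zsmul]
  rw [hv]
  exact sum_mem fun i _ => zsmul_mem (subset_span (mem_range_self i)) _

variable [TopologicalSpace V] [IsTopologicalAddGroup V] [ContinuousSMul ℝ V]

theorem isClosed_span_int [FiniteDimensional ℝ V] [T2Space V] (b : Basis ι ℝ V) :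
    IsClosed (span ℤ (range b) : Set V) := by
  have hL : (span ℤ (range b) : Set V) = ⋂ i, b.coord i ⁻¹' range ((↑) : ℤ → ℝ) := by
    ext v
    simpa using b.mem_span_iff_repr_mem ℤ v
  rw [hL]
  exact isClosed_iInter fun i => Int.isClosedEmbedding_coe_real.isClosed_range.preimage
    (b.coord i).continuous_of_finiteDimensional

theorem compactSpace_quotient_span_int [Fintype ι] (b : Basis ι ℝ V) :
    CompactSpace (V ⧸ (span ℤ (range b)).toAddSubgroup) := by
  rw [← isCompact_univ_iff, ← b.mk_image_parallelepiped]
  exact (isCompact_Icc.image (by fun_prop)).image continuous_quot_mk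

end Module.Basis

/-- Let `V` be a finite-dimensional real (Hausdorff topological) vector space, `L` the
`ℤ`-span of a basis of `V`, `T = V ⧸ L` the quotient torus with the quotient topology,
and `W` a finite group of linear automorphisms of `V` preserving `L`, acting on `T` by
`w • [v] = [w v]`.  Then the set `Σ` of points `t ∈ T` that are isolated in the fixed
set of their own stabilizer `W_t` is finite. -/
theorem stmt_7 {V : Type*} [AddCommGroup V] [Module ℝ V] [FiniteDimensional ℝ V]
    [TopologicalSpace V] [IsTopologicalAddGroup V] [ContinuousSMul ℝ V] [T2Space V]
    {ι : Type*} [Fintype ι] (b : Module.Basis ι ℝ V)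
    (L : Submodule ℤ V) (hL : L = Submodule.span ℤ (Set.range b))
    (W : Subgroup (V ≃ₗ[ℝ] V)) [Finite W]
    (hWL : ∀ w ∈ W, ⇑w '' (L : Set V) = (L : Set V)) :
    {t : V ⧸ L.toAddSubgroup | ∃ U : Set (V ⧸ L.toAddSubgroup), IsOpen U ∧
        U ∩ {x : V ⧸ L.toAddSubgroup | ∀ w ∈ W,
            (∀ v : V, (QuotientAddGroup.mk v : V ⧸ L.toAddSubgroup) = t →
              (QuotientAddGroup.mk (w v) : V ⧸ L.toAddSubgroup) = t) →
            (∀ v : V, (QuotientAddGroup.mk v : V ⧸ L.toAddSubgroup) = x →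
              (QuotientAddGroup.mk (w v) : V ⧸ L.toAddSubgroup) = x)} = {t}}.Finite := by
  subst hL
  have : IsClosed ((span ℤ (range b)).toAddSubgroup : Set V) := b.isClosed_span_int
  have := b.compactSpace_quotient_span_int
  have hW (w : W) : (span ℤ (range b)).toAddSubgroup ≤
      (span ℤ (range b)).toAddSubgroup.comap (w : V ≃ₗ[ℝ] V).toLinearMap.toAddMonoidHom :=
    fun v hv => (hWL w w.2).subset (mem_image_of_mem _ hv)
  let g (w : W) := QuotientAddGroup.map _ _ _ (hW w)
  refine (finite_setOf_isolated_in_fixedPoints_of_stabilizer g fun w =>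
    QuotientAddGroup.continuous_map _ _ _ (hW w)
      (w : V ≃ₗ[ℝ] V).toLinearMap.continuous_of_finiteDimensional).subset ?_
  rintro t ⟨U, hU, hUt⟩
  refine ⟨U, hU, Eq.trans ?_ hUt⟩
  ext x
  simp only [g, QuotientAddGroup.map_eq_self_iff, Subtype.forall, mem_inter_iff, mem_ofPred_eq]
  rfl
end
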